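/- arXiv:math/0206233 — 4 statements merged into one kernel-verified Lean document; each statement's English description precedes it below -/
import Mathlib

section
/- Let 0 → I → 𝔄 →σ→ A → 0 be an extension of Banach algebras with 𝔄 I = 0. Suppose the extension splits, i.e., there is a continuous algebra homomorphism κ : A → 𝔄 with σ ∘ κ = id_A, and suppose A has a left identity e. Then A is projective as a right Banach 𝔄-module (with the action a · u = a σ(u)): the map ρ : A → A ⊗̂ 𝔄, ρ(a) = e ⊗ κ(a), is a right 𝔄-module morphism satisfying π ∘ ρ = id_A, where π(a ⊗ u) = a σ(u). -/
noncomputable section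

/-- `P`, together with the bilinear map `tmul`, is (a realization of) the projective
tensor product `X ⊗̂ Y` of Banach spaces. -/
structure IsProjTensor {X Y P : Type} [NormedAddCommGroup X] [NormedSpace ℂ X]
    [NormedAddCommGroup Y] [NormedSpace ℂ Y]
    [NormedAddCommGroup P] [NormedSpace ℂ P]
    (tmul : X →L[ℂ] Y →L[ℂ] P) : Prop where
  norm_tmul_le : ∀ x y, ‖tmul x y‖ ≤ ‖x‖ * ‖y‖
  span_dense :
    (Submodule.span ℂ (Set.range fun xy : X × Y => tmul xy.1 xy.2)).topologicalClosure = ⊤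
  lift_exists : ∀ {Z : Type} [NormedAddCommGroup Z] [NormedSpace ℂ Z] [CompleteSpace Z]
      (b : X →L[ℂ] Y →L[ℂ] Z) (M : ℝ), (∀ x y, ‖b x y‖ ≤ M * (‖x‖ * ‖y‖)) →
      ∃ T : P →L[ℂ] Z, (∀ x y, T (tmul x y) = b x y) ∧ ‖T‖ ≤ M

/- STATEMENT 1: Let 0 → I → 𝔄 →σ→ A → 0 be an extension of Banach algebras with
𝔄 I = 0.  Suppose the extension splits via a continuous algebra homomorphism
κ : A → 𝔄 with σ ∘ κ = id, and that A has a left identity e.  Then A is projective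
as a right Banach 𝔄-module (action a · u = a σ(u)): for the canonical morphism
π : A ⊗̂ 𝔄 → A, π(a ⊗ u) = a σ(u), the map ρ(a) = e ⊗ κ(a) is a right 𝔄-module
morphism with π ∘ ρ = id. -/
theorem quotient_projective_of_split
    {𝔄 A : Type} [NonUnitalNormedRing 𝔄] [NormedSpace ℂ 𝔄]
    [IsScalarTower ℂ 𝔄 𝔄] [SMulCommClass ℂ 𝔄 𝔄] [CompleteSpace 𝔄]
    [NonUnitalNormedRing A] [NormedSpace ℂ A]
    [IsScalarTower ℂ A A] [SMulCommClass ℂ A A] [CompleteSpace A]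
    (σ : 𝔄 →L[ℂ] A) (hσmul : ∀ u v : 𝔄, σ (u * v) = σ u * σ v)
    (hσsurj : Function.Surjective σ)
    (hAI : ∀ u x : 𝔄, σ x = 0 → u * x = 0)
    -- the splitting homomorphism
    (κ : A →L[ℂ] 𝔄) (hκmul : ∀ a b : A, κ (a * b) = κ a * κ b)
    (hσκ : ∀ a : A, σ (κ a) = a)
    -- the left identity of A
    (e : A) (he : ∀ a : A, e * a = a)
    -- a realization P of the projective tensor product A ⊗̂ 𝔄
    (P : Type) [NormedAddCommGroup P] [NormedSpace ℂ P] [CompleteSpace P]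
    (tmul : A →L[ℂ] 𝔄 →L[ℂ] P) (htp : IsProjTensor tmul)
    -- the canonical morphism π : A ⊗̂ 𝔄 → A, a ⊗ u ↦ a σ(u)
    (π : P →L[ℂ] A) (hπ : ∀ (a : A) (u : 𝔄), π (tmul a u) = a * σ u)
    -- the right 𝔄-module action on A ⊗̂ 𝔄 : (a ⊗ v) · u = a ⊗ (v u)
    (R : P →L[ℂ] 𝔄 →L[ℂ] P) (hR : ∀ (a : A) (v u : 𝔄), R (tmul a v) u = tmul a (v * u)) :
    -- the map ρ(a) = e ⊗ κ(a)
    ∃ ρ : A →L[ℂ] P, (∀ a : A, ρ a = tmul e (κ a)) ∧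
      (∀ a : A, π (ρ a) = a) ∧
      -- ρ is a morphism of right 𝔄-modules: ρ(a · u) = ρ(a) · u
      (∀ (a : A) (u : 𝔄), ρ (a * σ u) = R (ρ a) u) := by
  refine ⟨(tmul e).comp κ, fun a => rfl, fun a => by simp [hπ, hσκ, he], fun a u => ?_⟩
  have key : κ a * u = κ a * κ (σ u) := by
    have h0 : σ (u - κ (σ u)) = 0 := by simp [hσκ]
    have := hAI (κ a) _ h0
    rw [mul_sub] at this
    exact sub_eq_zero.mp this
  simp only [ContinuousLinearMap.comp_apply, hκmul, hR, key]
end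
end

section
/- Let 0 → I → 𝔄 →σ→ A → 0 be an extension of Banach algebras with 𝔄 I = 0. If there exists a continuous antihomomorphism β : A → A with β² = id_A and a continuous linear map α : 𝔄 → 𝔄 with β ∘ σ = σ ∘ α, and if A is essential and projective as a right Banach 𝔄-module via σ, then the extension is admissible, i.e., σ admits a continuous linear right inverse. -/
/-!
Since `𝔄 · ker σ = 0`, the product `u * x` depends only on `σ x`, so `(a, u) ↦ u * σ⁻¹(a)` is a
well-defined bilinear map `A × 𝔄 → 𝔄`, bounded by the open mapping theorem. Composing it with
`β` and `α` and lifting to `A ⊗̂ 𝔄` gives `T` with `σ ∘ T = β ∘ π` on elementary tensors, hence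
everywhere. Then `κ = T ∘ ρ ∘ β` satisfies `σ ∘ κ = β ∘ π ∘ ρ ∘ β = β ∘ β = id`.
-/

noncomputable section

open Function

theorem mul_eq_mul_of_map_eq {F 𝔄 A : Type*} [NonUnitalRing 𝔄] [AddGroup A]
    [FunLike F 𝔄 A] [AddMonoidHomClass F 𝔄 A] (σ : F) (hAI : ∀ u x : 𝔄, σ x = 0 → u * x = 0)
    {x y : 𝔄} (h : σ x = σ y) (u : 𝔄) : u * x = u * y := by
  rw [← sub_eq_zero, ← mul_sub]
  exact hAI u _ (by rw [map_sub, h, sub_self])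

section MulLift

variable {𝕜 𝔄 A : Type*} [NontriviallyNormedField 𝕜]
  [NonUnitalNormedRing 𝔄] [NormedSpace 𝕜 𝔄] [IsScalarTower 𝕜 𝔄 𝔄] [SMulCommClass 𝕜 𝔄 𝔄]
  [NormedAddCommGroup A] [NormedSpace 𝕜 A]

def mulLiftₗ (σ : 𝔄 →L[𝕜] A) (hσ : Surjective σ) (hAI : ∀ u x : 𝔄, σ x = 0 → u * x = 0) :
    A →ₗ[𝕜] 𝔄 →ₗ[𝕜] 𝔄 :=
  LinearMap.mk₂ 𝕜 (fun a u => u * surjInv hσ a)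
    (fun a a' u => by
      rw [← mul_add]
      exact mul_eq_mul_of_map_eq σ hAI (by simp only [map_add, surjInv_eq]) u)
    (fun c a u => by
      rw [← mul_smul_comm]
      exact mul_eq_mul_of_map_eq σ hAI (by simp only [map_smul, surjInv_eq]) u)
    (fun a u u' => add_mul u u' _)
    (fun c a u => smul_mul_assoc c u _)

theorem mulLiftₗ_apply_of_map_eq (σ : 𝔄 →L[𝕜] A) (hσ : Surjective σ)
    (hAI : ∀ u x : 𝔄, σ x = 0 → u * x = 0) {a : A} {x : 𝔄} (hx : σ x = a) (u : 𝔄) :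
    mulLiftₗ σ hσ hAI a u = u * x :=
  mul_eq_mul_of_map_eq σ hAI (by rw [surjInv_eq hσ, hx]) u

theorem exists_continuous_mul_lift [CompleteSpace 𝔄] [CompleteSpace A]
    (σ : 𝔄 →L[𝕜] A) (hσ : Surjective σ) (hAI : ∀ u x : 𝔄, σ x = 0 → u * x = 0) :
    ∃ L : A →L[𝕜] 𝔄 →L[𝕜] 𝔄, ∀ (a : A) (u x : 𝔄), σ x = a → L a u = u * x := by
  obtain ⟨C, -, hC⟩ := σ.exists_preimage_norm_le hσ
  have hbound : ∀ a u, ‖mulLiftₗ σ hσ hAI a u‖ ≤ C * ‖a‖ * ‖u‖ := fun a u => by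
    obtain ⟨x, hx, hxa⟩ := hC a
    calc ‖mulLiftₗ σ hσ hAI a u‖ = ‖u * x‖ := by rw [mulLiftₗ_apply_of_map_eq σ hσ hAI hx]
      _ ≤ ‖u‖ * ‖x‖ := norm_mul_le u x
      _ ≤ ‖u‖ * (C * ‖a‖) := by gcongr
      _ = C * ‖a‖ * ‖u‖ := mul_comm _ _
  exact ⟨(mulLiftₗ σ hσ hAI).mkContinuous₂ C hbound,
    fun a u x hx => mulLiftₗ_apply_of_map_eq σ hσ hAI hx u⟩

end MulLift

namespace IsProjTensor

variable {X Y P : Type} [NormedAddCommGroup X] [NormedSpace ℂ X]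
  [NormedAddCommGroup Y] [NormedSpace ℂ Y] [NormedAddCommGroup P] [NormedSpace ℂ P]
  {tmul : X →L[ℂ] Y →L[ℂ] P}

theorem exists_lift (htp : IsProjTensor tmul) {Z : Type} [NormedAddCommGroup Z]
    [NormedSpace ℂ Z] [CompleteSpace Z] (b : X →L[ℂ] Y →L[ℂ] Z) :
    ∃ T : P →L[ℂ] Z, ∀ x y, T (tmul x y) = b x y :=
  (htp.lift_exists b ‖b‖ fun x y => by rw [← mul_assoc]; exact b.le_opNorm₂ x y).imp
    fun _ hT => hT.1

theorem ext (htp : IsProjTensor tmul) {Z : Type} [NormedAddCommGroup Z] [NormedSpace ℂ Z]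
    {f g : P →L[ℂ] Z} (h : ∀ x y, f (tmul x y) = g (tmul x y)) : f = g := by
  have hspan : Submodule.span ℂ (Set.range fun xy : X × Y => tmul xy.1 xy.2) ≤
      LinearMap.ker ((f - g : P →L[ℂ] Z) : P →ₗ[ℂ] Z) := by
    rw [Submodule.span_le]
    rintro _ ⟨⟨x, y⟩, rfl⟩
    simp [h]
  have hker := Submodule.topologicalClosure_minimal _ hspan (f - g).isClosed_ker
  rw [htp.span_dense] at hker
  ext p
  exact sub_eq_zero.mp (LinearMap.mem_ker.mp (hker Submodule.mem_top))

end IsProjTensor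

theorem extension_admissible_of_projective_general
    {𝔄 A : Type} [NonUnitalNormedRing 𝔄] [NormedSpace ℂ 𝔄]
    [IsScalarTower ℂ 𝔄 𝔄] [SMulCommClass ℂ 𝔄 𝔄] [CompleteSpace 𝔄]
    [NonUnitalNormedRing A] [NormedSpace ℂ A]
    [CompleteSpace A]
    (σ : 𝔄 →L[ℂ] A) (hσmul : ∀ u v : 𝔄, σ (u * v) = σ u * σ v)
    (hσsurj : Function.Surjective σ)
    (hAI : ∀ u x : 𝔄, σ x = 0 → u * x = 0)
    -- the antihomomorphism β with β² = id
    (β : A →L[ℂ] A) (hβmul : ∀ a b : A, β (a * b) = β b * β a)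
    (hβ2 : ∀ a : A, β (β a) = a)
    -- the continuous linear map α with β ∘ σ = σ ∘ α
    (α : 𝔄 →L[ℂ] 𝔄) (hβσ : ∀ u : 𝔄, β (σ u) = σ (α u))
    -- A is projective as a right 𝔄-module via σ: the canonical morphism
    -- π : A ⊗̂ 𝔄 → A, a ⊗ u ↦ a σ(u), has a right 𝔄-module morphism right inverse ρ
    (P : Type) [NormedAddCommGroup P] [NormedSpace ℂ P]
    (tmul : A →L[ℂ] 𝔄 →L[ℂ] P) (htp : IsProjTensor tmul)
    (π : P →L[ℂ] A) (hπ : ∀ (a : A) (u : 𝔄), π (tmul a u) = a * σ u)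
    (ρ : A →L[ℂ] P)
    (hπρ : ∀ a : A, π (ρ a) = a) :
    -- the extension is admissible
    ∃ κ : A →L[ℂ] 𝔄, ∀ a : A, σ (κ a) = a := by
  obtain ⟨L, hL⟩ := exists_continuous_mul_lift σ hσsurj hAI
  obtain ⟨T, hT⟩ := htp.exists_lift (L.bilinearComp β α)
  have hσT : σ.comp T = β.comp π := htp.ext fun a u => by
    obtain ⟨x, hx⟩ := hσsurj (β a)
    calc σ (T (tmul a u)) = σ (α u * x) := by rw [hT, L.bilinearComp_apply, hL _ _ _ hx]
      _ = β (σ u) * β a := by rw [hσmul, hx, hβσ]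
      _ = β (π (tmul a u)) := by rw [hπ, hβmul]
  refine ⟨T.comp (ρ.comp β), fun a => ?_⟩
  simpa [hπρ, hβ2] using congr($hσT (ρ (β a)))

theorem extension_admissible_of_projective
    {𝔄 A : Type} [NonUnitalNormedRing 𝔄] [NormedSpace ℂ 𝔄]
    [IsScalarTower ℂ 𝔄 𝔄] [SMulCommClass ℂ 𝔄 𝔄] [CompleteSpace 𝔄]
    [NonUnitalNormedRing A] [NormedSpace ℂ A]
    [IsScalarTower ℂ A A] [SMulCommClass ℂ A A] [CompleteSpace A]
    (σ : 𝔄 →L[ℂ] A) (hσmul : ∀ u v : 𝔄, σ (u * v) = σ u * σ v)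
    (hσsurj : Function.Surjective σ)
    (hAI : ∀ u x : 𝔄, σ x = 0 → u * x = 0)
    -- the antihomomorphism β with β² = id
    (β : A →L[ℂ] A) (hβmul : ∀ a b : A, β (a * b) = β b * β a)
    (hβ2 : ∀ a : A, β (β a) = a)
    -- the continuous linear map α with β ∘ σ = σ ∘ α
    (α : 𝔄 →L[ℂ] 𝔄) (hβσ : ∀ u : 𝔄, β (σ u) = σ (α u))
    -- A is essential as a right 𝔄-module via σ
    (hess : (Submodule.span ℂ {x : A | ∃ (a : A) (u : 𝔄), x = a * σ u}).topologicalClosure = ⊤)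
    -- A is projective as a right 𝔄-module via σ: the canonical morphism
    -- π : A ⊗̂ 𝔄 → A, a ⊗ u ↦ a σ(u), has a right 𝔄-module morphism right inverse ρ
    (P : Type) [NormedAddCommGroup P] [NormedSpace ℂ P] [CompleteSpace P]
    (tmul : A →L[ℂ] 𝔄 →L[ℂ] P) (htp : IsProjTensor tmul)
    (π : P →L[ℂ] A) (hπ : ∀ (a : A) (u : 𝔄), π (tmul a u) = a * σ u)
    (R : P →L[ℂ] 𝔄 →L[ℂ] P) (hR : ∀ (a : A) (v u : 𝔄), R (tmul a v) u = tmul a (v * u))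
    (ρ : A →L[ℂ] P) (hρmod : ∀ (a : A) (u : 𝔄), ρ (a * σ u) = R (ρ a) u)
    (hπρ : ∀ a : A, π (ρ a) = a) :
    -- the extension is admissible
    ∃ κ : A →L[ℂ] 𝔄, ∀ a : A, σ (κ a) = a :=
  extension_admissible_of_projective_general σ hσmul hσsurj hAI β hβmul hβ2 α hβσ P tmul htp π hπ ρ
    hπρ
end
end

section
/- Let 0 → I → 𝔄 →σ→ A → 0 be an extension of Banach algebras with 𝔄 I = 0, 𝔄² = 𝔄 (closed linear span of products is all of 𝔄), and suppose A has a right bounded approximate identity. Then 𝔄 has a right bounded approximate identity; more precisely, any bounded net (e_ν) in 𝔄 such that (σ(e_ν)) is a right b.a.i. in A is itself a right b.a.i. in 𝔄. -/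
/-!
For `v, w ∈ 𝔄` one has `‖v w e_ν - v w‖ ≤ K ‖v‖ ‖σ(w) σ(e_ν) - σ(w)‖`: since `𝔄` annihilates
`ker σ`, the product `v x` depends only on `σ x`, and by the open mapping theorem `x` may be
replaced by a preimage of `σ x` of norm at most `K ‖σ x‖`. Hence `u e_ν → u` for all products
`u`; as `(e_ν)` is bounded, the set of such `u` is a closed subspace, so it is all of `𝔄` because
`𝔄² = 𝔄`. Lifting a right b.a.i. of `A` to preimages of controlled norm gives one of `𝔄`.
-/

noncomputable section

/-- A Banach algebra `B` has a right bounded approximate identity: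
a bounded net `(e_ν)` with `‖b e_ν - b‖ → 0` for every `b`. -/
def HasRightBAI (B : Type) [NonUnitalNormedRing B] : Prop :=
  ∃ (ι : Type) (l : Filter ι) (e : ι → B), l.NeBot ∧
    (∃ C : ℝ, ∀ᶠ n in l, ‖e n‖ ≤ C) ∧
    ∀ b : B, Filter.Tendsto (fun n => b * e n) l (nhds b)

open Filter Topology

/-- Truncating `e` where it exceeds the bound makes `u ↦ u * e n` uniformly Lipschitz, hence
equicontinuous, without changing the limits along `l`. -/
theorem isClosed_setOf_tendsto_mul_right {B ι : Type*} [NonUnitalSeminormedRing B]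
    {l : Filter ι} {e : ι → B} (he : ∃ C, ∀ᶠ n in l, ‖e n‖ ≤ C) :
    IsClosed {u : B | Tendsto (fun n => u * e n) l (𝓝 u)} := by
  obtain ⟨C, hC⟩ := he
  classical
  set e' : ι → B := fun n => if ‖e n‖ ≤ C then e n else 0
  have he'_bound (n : ι) : ‖e' n‖ ≤ max C 0 := by
    by_cases h : ‖e n‖ ≤ C <;> simp [e', h]
  have he'_eq (u : B) : (fun n => u * e' n) =ᶠ[l] fun n => u * e n :=
    hC.mono fun n hn => by simp [e', hn]
  have hlip (n : ι) : LipschitzWith (max C 0).toNNReal (fun u : B => u * e' n) :=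
    AddMonoidHomClass.lipschitz_of_bound (AddMonoidHom.mulRight (e' n)) _ fun u =>
      (norm_mul_le u (e' n)).trans <| by
        rw [mul_comm]; gcongr; exact he'_bound n
  have := (LipschitzWith.uniformEquicontinuous _ _ hlip).equicontinuous
    |>.isClosed_setOfPred_tendsto (l := l) continuous_id
  simpa only [id, tendsto_congr' (he'_eq _)] using this

theorem tendsto_mul_right_of_dense_span {𝕜 B : Type*} [NormedField 𝕜] [NonUnitalSeminormedRing B]
    [NormedSpace 𝕜 B] [IsScalarTower 𝕜 B B] {ι : Type*} {l : Filter ι} {e : ι → B} {s : Set B}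
    (hs : (Submodule.span 𝕜 s).topologicalClosure = ⊤) (he : ∃ C, ∀ᶠ n in l, ‖e n‖ ≤ C)
    (hconv : ∀ x ∈ s, Tendsto (fun n => x * e n) l (𝓝 x)) (u : B) :
    Tendsto (fun n => u * e n) l (𝓝 u) := by
  have hspan : (Submodule.span 𝕜 s : Set B) ⊆ {x | Tendsto (fun n => x * e n) l (𝓝 x)} := by
    intro x hx
    induction hx using Submodule.span_induction with
    | mem x hx => exact hconv x hx
    | zero => simpa using tendsto_const_nhds
    | add x y _ _ hx hy => simpa only [Set.mem_ofPred_eq, add_mul] using hx.add hy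
    | smul c x _ hx => simpa only [Set.mem_ofPred_eq, smul_mul_assoc] using hx.const_smul c
  have hu : u ∈ closure (Submodule.span 𝕜 s : Set B) := by
    rw [← Submodule.topologicalClosure_coe, hs]; trivial
  exact closure_minimal hspan (isClosed_setOf_tendsto_mul_right he) hu

theorem exists_norm_mul_le_of_mul_ker_eq_zero {𝕜 𝔄 E : Type*} [NontriviallyNormedField 𝕜]
    [NonUnitalNormedRing 𝔄] [NormedSpace 𝕜 𝔄] [CompleteSpace 𝔄] [NormedAddCommGroup E]
    [NormedSpace 𝕜 E] [CompleteSpace E] {σ : 𝔄 →L[𝕜] E} (hσsurj : Function.Surjective σ)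
    (hAI : ∀ u x : 𝔄, σ x = 0 → u * x = 0) :
    ∃ K : ℝ, ∀ v x : 𝔄, ‖v * x‖ ≤ K * ‖v‖ * ‖σ x‖ := by
  obtain ⟨K, -, hK⟩ := σ.exists_preimage_norm_le hσsurj
  refine ⟨K, fun v x => ?_⟩
  obtain ⟨y, hy, hy_norm⟩ := hK (σ x)
  have hxy : v * x = v * y := by
    rw [← sub_eq_zero, ← mul_sub]
    exact hAI v _ (by rw [map_sub, hy, sub_self])
  calc ‖v * x‖ = ‖v * y‖ := by rw [hxy]
    _ ≤ ‖v‖ * (K * ‖σ x‖) := (norm_mul_le v y).trans (by gcongr)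
    _ = K * ‖v‖ * ‖σ x‖ := by ring

section Extension

variable {𝕜 𝔄 A ι : Type*} [NontriviallyNormedField 𝕜] [NonUnitalNormedRing 𝔄] [NormedSpace 𝕜 𝔄]
  [CompleteSpace 𝔄] [NonUnitalNormedRing A] [NormedSpace 𝕜 A] [CompleteSpace A]
  {σ : 𝔄 →L[𝕜] A} {l : Filter ι} {e : ι → 𝔄}

theorem tendsto_mul_mul_right_of_tendsto_map (hσmul : ∀ u v : 𝔄, σ (u * v) = σ u * σ v)
    (hσsurj : Function.Surjective σ) (hAI : ∀ u x : 𝔄, σ x = 0 → u * x = 0) (w : 𝔄)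
    (he : Tendsto (fun n => σ w * σ (e n)) l (𝓝 (σ w))) (v : 𝔄) :
    Tendsto (fun n => v * w * e n) l (𝓝 (v * w)) := by
  obtain ⟨K, hK⟩ := exists_norm_mul_le_of_mul_ker_eq_zero hσsurj hAI
  rw [tendsto_iff_norm_sub_tendsto_zero] at he ⊢
  refine squeeze_zero (fun _ => norm_nonneg _) (fun n => ?_) (by simpa using he.const_mul (K * ‖v‖))
  calc ‖v * w * e n - v * w‖ = ‖v * (w * e n - w)‖ := by rw [mul_sub, mul_assoc]
    _ ≤ K * ‖v‖ * ‖σ w * σ (e n) - σ w‖ := by simpa only [map_sub, hσmul] using hK v (w * e n - w)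

theorem tendsto_mul_right_of_tendsto_map [IsScalarTower 𝕜 𝔄 𝔄]
    (hσmul : ∀ u v : 𝔄, σ (u * v) = σ u * σ v) (hσsurj : Function.Surjective σ)
    (hAI : ∀ u x : 𝔄, σ x = 0 → u * x = 0)
    (hsq : (Submodule.span 𝕜 {w : 𝔄 | ∃ u v : 𝔄, w = u * v}).topologicalClosure = ⊤)
    (hbdd : ∃ C, ∀ᶠ n in l, ‖e n‖ ≤ C) (he : ∀ a, Tendsto (fun n => a * σ (e n)) l (𝓝 a))
    (u : 𝔄) : Tendsto (fun n => u * e n) l (𝓝 u) := by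
  refine tendsto_mul_right_of_dense_span hsq hbdd ?_ u
  rintro _ ⟨v, w, rfl⟩
  exact tendsto_mul_mul_right_of_tendsto_map hσmul hσsurj hAI w (he (σ w)) v

end Extension

theorem rbai_lifts_along_extension_general
    {𝔄 A : Type} [NonUnitalNormedRing 𝔄] [NormedSpace ℂ 𝔄]
    [IsScalarTower ℂ 𝔄 𝔄] [CompleteSpace 𝔄]
    [NonUnitalNormedRing A] [NormedSpace ℂ A]
    [CompleteSpace A]
    (σ : 𝔄 →L[ℂ] A) (hσmul : ∀ u v : 𝔄, σ (u * v) = σ u * σ v)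
    (hσsurj : Function.Surjective σ)
    (hAI : ∀ u x : 𝔄, σ x = 0 → u * x = 0)
    -- 𝔄² = 𝔄
    (hsq : (Submodule.span ℂ {w : 𝔄 | ∃ u v : 𝔄, w = u * v}).topologicalClosure = ⊤)
    -- A has a right b.a.i.
    (hA : HasRightBAI A) :
    -- 𝔄 has a right b.a.i. ...
    HasRightBAI 𝔄 ∧
    -- ... and more precisely: every bounded net in 𝔄 whose image under σ is a
    -- right b.a.i. in A is itself a right b.a.i. in 𝔄
    (∀ (ι : Type) (l : Filter ι) (e : ι → 𝔄), l.NeBot →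
      (∃ C : ℝ, ∀ᶠ n in l, ‖e n‖ ≤ C) →
      (∀ a : A, Filter.Tendsto (fun n => a * σ (e n)) l (nhds a)) →
      ∀ u : 𝔄, Filter.Tendsto (fun n => u * e n) l (nhds u)) := by
  have hlift : ∀ (ι : Type) (l : Filter ι) (e : ι → 𝔄), l.NeBot →
      (∃ C : ℝ, ∀ᶠ n in l, ‖e n‖ ≤ C) →
      (∀ a : A, Tendsto (fun n => a * σ (e n)) l (𝓝 a)) →
      ∀ u : 𝔄, Tendsto (fun n => u * e n) l (𝓝 u) :=
    fun _ _ _ _ hbdd he => tendsto_mul_right_of_tendsto_map hσmul hσsurj hAI hsq hbdd he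
  refine ⟨?_, hlift⟩
  obtain ⟨ι, l, f, hne, ⟨C, hC⟩, hf⟩ := hA
  obtain ⟨K, hK0, hK⟩ := σ.exists_preimage_norm_le hσsurj
  choose e hσe he_norm using fun n => hK (f n)
  have hbdd : ∀ᶠ n in l, ‖e n‖ ≤ K * C := hC.mono fun n hn => (he_norm n).trans (by gcongr)
  have he : ∀ a : A, Tendsto (fun n => a * σ (e n)) l (𝓝 a) := by simpa only [hσe] using hf
  exact ⟨ι, l, e, hne, ⟨K * C, hbdd⟩, hlift ι l e hne ⟨K * C, hbdd⟩ he⟩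

theorem rbai_lifts_along_extension
    {𝔄 A : Type} [NonUnitalNormedRing 𝔄] [NormedSpace ℂ 𝔄]
    [IsScalarTower ℂ 𝔄 𝔄] [SMulCommClass ℂ 𝔄 𝔄] [CompleteSpace 𝔄]
    [NonUnitalNormedRing A] [NormedSpace ℂ A]
    [IsScalarTower ℂ A A] [SMulCommClass ℂ A A] [CompleteSpace A]
    (σ : 𝔄 →L[ℂ] A) (hσmul : ∀ u v : 𝔄, σ (u * v) = σ u * σ v)
    (hσsurj : Function.Surjective σ)
    (hAI : ∀ u x : 𝔄, σ x = 0 → u * x = 0)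
    -- 𝔄² = 𝔄
    (hsq : (Submodule.span ℂ {w : 𝔄 | ∃ u v : 𝔄, w = u * v}).topologicalClosure = ⊤)
    -- A has a right b.a.i.
    (hA : HasRightBAI A) :
    -- 𝔄 has a right b.a.i. ...
    HasRightBAI 𝔄 ∧
    -- ... and more precisely: every bounded net in 𝔄 whose image under σ is a
    -- right b.a.i. in A is itself a right b.a.i. in 𝔄
    (∀ (ι : Type) (l : Filter ι) (e : ι → 𝔄), l.NeBot →
      (∃ C : ℝ, ∀ᶠ n in l, ‖e n‖ ≤ C) →
      (∀ a : A, Filter.Tendsto (fun n => a * σ (e n)) l (nhds a)) →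
      ∀ u : 𝔄, Filter.Tendsto (fun n => u * e n) l (nhds u)) :=
  rbai_lifts_along_extension_general σ hσmul hσsurj hAI hsq hA
end
end

section
/- Let G be a discrete group and 1 < p < ∞. The map κ : ℓ¹(G) → 𝒩^p(G), f ↦ M_{f̌} (where f̌(t) = f(t⁻¹)), is a continuous algebra homomorphism from the convolution algebra ℓ¹(G) into the Neufang convolution algebra 𝒩^p(G) satisfying σ ∘ κ = id_{ℓ¹(G)}; hence the extension 0 → I → 𝒩^p(G) → ℓ¹(G) → 0 splits. -/
/-!
A bounded family `ψ : G → A` in a Banach algebra extends linearly and continuously to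
`ℓ¹(G) → A`, `f ↦ ∑ₜ f t • ψ t`. When `ψ` is multiplicative, absolute convergence lets the
product of two such series be regrouped along the fibres of `(s, u) ↦ s * u`, which is exactly
convolution, so the extension is multiplicative. Since `M_{δ_s} * M_{δ_t} = M_{δ_{ts}}`, the
family `t ↦ M_{δ_{t⁻¹}}` is multiplicative, and its extension is `κ`; `σ ∘ κ = id` holds on
the point masses `δ_t`, which span a dense subspace of `ℓ¹(G)`.
-/

noncomputable section

namespace lp

variable {𝕜 G A : Type*} [NontriviallyNormedField 𝕜] [NonUnitalNormedRing A] [NormedSpace 𝕜 A]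

theorem hasSum_norm_one (f : lp (fun _ : G => 𝕜) 1) : HasSum (fun t => ‖f t‖) ‖f‖ := by
  simpa using lp.hasSum_norm (p := 1) (by norm_num) f

theorem summable_mul_apply_inv_mul [Group G] [CompleteSpace 𝕜]
    (f g : lp (fun _ : G => 𝕜) 1) (u : G) :
    Summable (fun s => f s * g (s⁻¹ * u)) :=
  .of_norm_bounded ((hasSum_norm_one f).summable.mul_right ‖g‖) fun s => by
    rw [norm_mul]
    exact mul_le_mul_of_nonneg_left (lp.norm_apply_le_norm one_ne_zero g _) (norm_nonneg _)

theorem norm_smul_le_of_norm_le {ψ : G → A} {C : ℝ} (hψ : ∀ t, ‖ψ t‖ ≤ C)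
    (f : lp (fun _ : G => 𝕜) 1) (t : G) : ‖f t • ψ t‖ ≤ ‖f t‖ * C := by
  rw [norm_smul]
  exact mul_le_mul_of_nonneg_left (hψ t) (norm_nonneg _)

theorem summable_norm_smul_of_norm_le {ψ : G → A} {C : ℝ} (hψ : ∀ t, ‖ψ t‖ ≤ C)
    (f : lp (fun _ : G => 𝕜) 1) : Summable (fun t => ‖f t • ψ t‖) :=
  .of_nonneg_of_le (fun _ => norm_nonneg _) (norm_smul_le_of_norm_le hψ f)
    ((hasSum_norm_one f).summable.mul_right C)

variable [CompleteSpace A]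

theorem summable_smul_of_norm_le {ψ : G → A} {C : ℝ} (hψ : ∀ t, ‖ψ t‖ ≤ C)
    (f : lp (fun _ : G => 𝕜) 1) : Summable (fun t => f t • ψ t) :=
  (summable_norm_smul_of_norm_le hψ f).of_norm

def oneLift (ψ : G → A) {C : ℝ} (hψ : ∀ t, ‖ψ t‖ ≤ C) : lp (fun _ : G => 𝕜) 1 →L[𝕜] A :=
  LinearMap.mkContinuous
    { toFun := fun f => ∑' t, f t • ψ t
      map_add' := fun f g => by
        simp only [lp.coeFn_add, Pi.add_apply, add_smul]
        exact (summable_smul_of_norm_le hψ f).tsum_add (summable_smul_of_norm_le hψ g)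
      map_smul' := fun c f => by
        simp only [lp.coeFn_smul, Pi.smul_apply, smul_eq_mul, mul_smul, RingHom.id_apply]
        exact tsum_const_smul'' c }
    C fun f => by
      rw [mul_comm]
      exact tsum_of_norm_bounded ((hasSum_norm_one f).mul_right C) (norm_smul_le_of_norm_le hψ f)

variable {ψ : G → A} {C : ℝ} (hψ : ∀ t, ‖ψ t‖ ≤ C)
include hψ

theorem hasSum_oneLift (f : lp (fun _ : G => 𝕜) 1) :
    HasSum (fun t => f t • ψ t) (oneLift ψ hψ f) :=
  (summable_smul_of_norm_le hψ f).hasSum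

theorem oneLift_single [DecidableEq G] (s : G) (c : 𝕜) :
    oneLift ψ hψ (lp.single 1 s c) = c • ψ s := by
  refine ((hasSum_oneLift hψ _).unique (hasSum_single s fun t hts => ?_)).trans ?_
  · simp [hts]
  · simp

theorem leftInverse_oneLift [DecidableEq G] (L : A →L[𝕜] lp (fun _ : G => 𝕜) 1)
    (hL : ∀ t, L (ψ t) = lp.single 1 t 1) : Function.LeftInverse L (oneLift ψ hψ) := by
  intro f
  refine ((hasSum_oneLift hψ f).mapL L).unique ?_
  convert lp.hasSum_single (p := 1) ENNReal.one_ne_top f using 2 with t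
  rw [map_smul, hL, ← lp.single_smul, smul_eq_mul, mul_one]

/-- Stated as a `HasSum` of the convolution series, so that no `ℓ¹` structure on the
convolution is needed. -/
theorem hasSum_conv_smul_oneLift_mul [Group G] [CompleteSpace 𝕜]
    [IsScalarTower 𝕜 A A] [SMulCommClass 𝕜 A A]
    (hψmul : ∀ s t, ψ s * ψ t = ψ (s * t)) (f g : lp (fun _ : G => 𝕜) 1) :
    HasSum (fun u => (∑' s, f s * g (s⁻¹ * u)) • ψ u) (oneLift ψ hψ f * oneLift ψ hψ g) := by
  have hprod : HasSum (fun st : G × G => (f st.1 * g st.2) • ψ (st.1 * st.2))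
      (oneLift ψ hψ f * oneLift ψ hψ g) := by
    have hsummable : Summable (fun st : G × G => (f st.1 • ψ st.1) * (g st.2 • ψ st.2)) :=
      .of_norm_bounded ((summable_norm_smul_of_norm_le hψ f).mul_of_nonneg
        (summable_norm_smul_of_norm_le hψ g) (fun _ => norm_nonneg _) fun _ => norm_nonneg _)
        fun _ => norm_mul_le _ _
    convert (hasSum_oneLift hψ f).mul (hasSum_oneLift hψ g) hsummable using 2 with st
    rw [smul_mul_smul_comm, hψmul]
  -- regroup the double series along the fibres `s * v = u`
  let e : G × G ≃ G × G :=
    (Equiv.prodShear (Equiv.refl G) Equiv.mulLeft).trans (Equiv.prodComm G G)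
  have hregrouped : HasSum (fun us : G × G => (f us.2 * g (us.2⁻¹ * us.1)) • ψ us.1)
      (oneLift ψ hψ f * oneLift ψ hψ g) :=
    e.hasSum_iff.mp (by convert hprod using 2 with st; simp [e])
  exact hregrouped.prod_fiberwise fun u =>
    (summable_mul_apply_inv_mul f g u).hasSum.smul_const (ψ u)

end lp

theorem kappa_splits_neufang_extension_general
    {G : Type} [Group G] [DecidableEq G]
    -- the Neufang algebra 𝒩^p(G), abstractly
    (N : Type) [NonUnitalNormedRing N] [NormedSpace ℂ N]
    [IsScalarTower ℂ N N] [SMulCommClass ℂ N N] [CompleteSpace N]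
    -- the operators M_{δ_s} ∈ 𝒩^p(G)
    (ι : G → N) (hιnorm : ∀ s, ‖ι s‖ ≤ 1)
    (hιmul : ∀ s t : G, ι s * ι t = ι (t * s))
    -- the indicators δ_t ∈ ℓ¹(G)
    (δ : G → lp (fun _ : G => ℂ) 1)
    (hδ : ∀ t u : G, (δ t) u = if u = t then 1 else 0)
    -- σ : 𝒩^p(G) → ℓ¹(G), an algebra homomorphism with σ(M_{δ_s}) = δ_{s⁻¹}
    (σ : N →L[ℂ] lp (fun _ : G => ℂ) 1)
    (hσι : ∀ s : G, σ (ι s) = δ s⁻¹)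
    -- the convolution product on ℓ¹(G)
    (conv1 : lp (fun _ : G => ℂ) 1 → lp (fun _ : G => ℂ) 1 → lp (fun _ : G => ℂ) 1)
    (hconv1 : ∀ f g : lp (fun _ : G => ℂ) 1, ∀ t : G,
      (conv1 f g) t = ∑' s : G, f s * g (s⁻¹ * t)) :
    ∃ κ : lp (fun _ : G => ℂ) 1 →L[ℂ] N,
      (∀ f g : lp (fun _ : G => ℂ) 1, κ (conv1 f g) = κ f * κ g) ∧
      (∀ f : lp (fun _ : G => ℂ) 1, σ (κ f) = f) ∧
      (∀ s : G, κ (δ s) = ι s⁻¹) := by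
  have hδ_single (t : G) : δ t = lp.single 1 t 1 := by
    ext u
    rw [hδ, lp.single_apply, Pi.single_apply]
  have hψnorm (t : G) : ‖ι t⁻¹‖ ≤ 1 := hιnorm t⁻¹
  have hψmul (s t : G) : ι s⁻¹ * ι t⁻¹ = ι (s * t)⁻¹ := by rw [hιmul, mul_inv_rev]
  refine ⟨lp.oneLift (fun t => ι t⁻¹) hψnorm, fun f g => ?_, fun f => ?_, fun s => ?_⟩
  · refine (lp.hasSum_oneLift hψnorm _).unique ?_
    simpa only [hconv1] using lp.hasSum_conv_smul_oneLift_mul hψnorm hψmul f g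
  · exact lp.leftInverse_oneLift hψnorm σ (fun t => by rw [hσι, inv_inv, hδ_single]) f
  · rw [hδ_single, lp.oneLift_single, one_smul]

theorem kappa_splits_neufang_extension
    {G : Type} [Group G] [DecidableEq G]
    (p : ENNReal) [Fact (1 ≤ p)] (hp1 : 1 < p) (hp2 : p < ⊤)
    -- the Neufang algebra 𝒩^p(G), abstractly
    (N : Type) [NonUnitalNormedRing N] [NormedSpace ℂ N]
    [IsScalarTower ℂ N N] [SMulCommClass ℂ N N] [CompleteSpace N]
    -- the operators M_{δ_s} ∈ 𝒩^p(G)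
    (ι : G → N) (hιnorm : ∀ s, ‖ι s‖ ≤ 1)
    (hιmul : ∀ s t : G, ι s * ι t = ι (t * s))
    -- the indicators δ_t ∈ ℓ¹(G)
    (δ : G → lp (fun _ : G => ℂ) 1)
    (hδ : ∀ t u : G, (δ t) u = if u = t then 1 else 0)
    -- σ : 𝒩^p(G) → ℓ¹(G), an algebra homomorphism with σ(M_{δ_s}) = δ_{s⁻¹}
    (σ : N →L[ℂ] lp (fun _ : G => ℂ) 1)
    (hσι : ∀ s : G, σ (ι s) = δ s⁻¹)
    -- the convolution product on ℓ¹(G)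
    (conv1 : lp (fun _ : G => ℂ) 1 → lp (fun _ : G => ℂ) 1 → lp (fun _ : G => ℂ) 1)
    (hconv1 : ∀ f g : lp (fun _ : G => ℂ) 1, ∀ t : G,
      (conv1 f g) t = ∑' s : G, f s * g (s⁻¹ * t))
    -- σ is an algebra homomorphism
    (hσmul : ∀ u v : N, σ (u * v) = conv1 (σ u) (σ v)) :
    ∃ κ : lp (fun _ : G => ℂ) 1 →L[ℂ] N,
      (∀ f g : lp (fun _ : G => ℂ) 1, κ (conv1 f g) = κ f * κ g) ∧
      (∀ f : lp (fun _ : G => ℂ) 1, σ (κ f) = f) ∧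
      (∀ s : G, κ (δ s) = ι s⁻¹) :=
  kappa_splits_neufang_extension_general N ι hιnorm hιmul δ hδ σ hσι conv1 hconv1
end
end
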